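/- arXiv:2512.07654 — 2 statements merged into one kernel-verified Lean document; each statement's English description precedes it below -/
import Mathlib

section
/- Let Γ ⊆ ℕ^n be the set of elements of a submonoid M of ℕ^n that are not expressible as a sum of two nonzero elements of M. If M contains d_1 e_1, ..., d_n e_n for some positive integers d_1,...,d_n (where e_i are standard basis vectors), then Γ is finite. -/
/-! If `y ≤ x` in `M` have the same residues modulo `d`, then every coordinate of `x - y` is
divisible by the corresponding `d i`, so `x - y` is an `ℕ`-combination of the `d i • e i` and lies
in `M`.  Hence an irreducible element is minimal among the nonzero elements of `M` in its residue
class.  By Dickson's lemma the minimal elements of any subset of `ℕⁿ` form a finite set, and there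
are only finitely many residue classes. -/

open Set

def AddSubmonoid.irreducibles {α : Type*} [AddMonoid α] (M : AddSubmonoid α) : Set α :=
  {x | x ∈ M ∧ x ≠ 0 ∧ ¬ ∃ a b, a ∈ M ∧ b ∈ M ∧ a ≠ 0 ∧ b ≠ 0 ∧ x = a + b}

theorem Set.finite_setOf_minimal {α : Type*} [PartialOrder α] [WellQuasiOrderedLE α]
    (P : α → Prop) : {x | Minimal P x}.Finite :=
  (setOfPred_minimal_antichain P).finite_of_partiallyWellOrderedOn
    (Set.isPWO_of_wellQuasiOrderedLE _)

namespace AddSubmonoid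

variable {ι : Type*} [Fintype ι] [DecidableEq ι] {M : AddSubmonoid (ι → ℕ)} {d : ι → ℕ}

theorem mem_of_forall_dvd (hdM : ∀ i, Pi.single i (d i) ∈ M) {v : ι → ℕ}
    (hv : ∀ i, d i ∣ v i) : v ∈ M := by
  rw [← Finset.univ_sum_single v]
  refine M.sum_mem fun i _ => ?_
  obtain ⟨k, hk⟩ := hv i
  rw [hk, mul_comm, ← smul_eq_mul, Pi.single_smul]
  exact nsmul_mem (hdM i) k

theorem minimal_of_mem_irreducibles (hdM : ∀ i, Pi.single i (d i) ∈ M) {x : ι → ℕ}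
    (hx : x ∈ M.irreducibles) :
    Minimal (fun y => y ∈ M ∧ y ≠ 0 ∧ ∀ i, y i % d i = x i % d i) x := by
  obtain ⟨hxM, hx0, hirr⟩ := hx
  refine ⟨⟨hxM, hx0, fun _ => rfl⟩, fun y ⟨hyM, hy0, hyx⟩ hle => ?_⟩
  by_contra hxy
  have hdiff : x - y ∈ M := mem_of_forall_dvd hdM fun i =>
    Nat.dvd_of_mod_eq_zero (Nat.sub_mod_eq_zero_of_mod_eq (hyx i).symm)
  exact hirr ⟨y, x - y, hyM, hdiff, hy0, fun h => hxy (tsub_eq_zero_iff_le.mp h),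
    (add_tsub_cancel_of_le hle).symm⟩

end AddSubmonoid

/-- Let `M` be a submonoid of `ℕⁿ` and `Γ` the set of nonzero elements of `M` that are not
a sum of two nonzero elements of `M`.  If `M` contains positive multiples `d i • e i` of all
standard basis vectors, then `Γ` is finite. -/
theorem irreducibles_finite_of_basis_multiples {n : ℕ}
    (M : AddSubmonoid (Fin n → ℕ))
    (d : Fin n → ℕ) (hd : ∀ i, 0 < d i)
    (hdM : ∀ i : Fin n, (fun j => if j = i then d i else 0) ∈ M) :
    {x : Fin n → ℕ | x ∈ M ∧ x ≠ 0 ∧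
      ¬ ∃ a b : Fin n → ℕ, a ∈ M ∧ b ∈ M ∧ a ≠ 0 ∧ b ≠ 0 ∧ x = a + b}.Finite := by
  have hsingle : ∀ i, Pi.single i (d i) ∈ M := fun i => by
    convert hdM i using 1
    exact funext (Pi.single_apply i (d i))
  have hresidues : (Set.pi univ fun i => Iio (d i)).Finite :=
    Set.Finite.pi fun i => finite_Iio (d i)
  refine (hresidues.biUnion fun r _ =>
    finite_setOf_minimal fun y => y ∈ M ∧ y ≠ 0 ∧ ∀ i, y i % d i = r i).subset ?_
  intro x hx
  exact mem_biUnion (fun i _ => Nat.mod_lt _ (hd i))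
    (AddSubmonoid.minimal_of_mem_irreducibles hsingle hx)
end

section
/- Let a, b, c be positive integers with 1/a + 1/b + 1/c > 1. Then the unordered triple {a,b,c} is one of: {1,x,y} for any x,y; {2,2,x} for any x; {2,3,3}; {2,3,4}; or {2,3,5}. -/
lemma sorted_spherical (a b c : ℕ)
    (ha : 1 ≤ a) (hab : a ≤ b) (hbc : b ≤ c)
    (h : 1 < (1 / a + 1 / b + 1 / c : ℚ)) :
    (∃ x y : ℕ, ({a, b, c} : Multiset ℕ) = {1, x, y}) ∨
    (∃ x : ℕ, ({a, b, c} : Multiset ℕ) = {2, 2, x}) ∨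
    ({a, b, c} : Multiset ℕ) = {2, 3, 3} ∨
    ({a, b, c} : Multiset ℕ) = {2, 3, 4} ∨
    ({a, b, c} : Multiset ℕ) = {2, 3, 5} := by
  have hb : 1 ≤ b := le_trans ha hab
  have hc : 1 ≤ c := le_trans hb hbc
  have haq : (0:ℚ) < a := by exact_mod_cast ha
  have hbq : (0:ℚ) < b := by exact_mod_cast hb
  have hcq : (0:ℚ) < c := by exact_mod_cast hc
  rcases eq_or_lt_of_le ha with h1 | h2a
  · exact Or.inl ⟨b, c, by rw [← h1]⟩
  -- a ≥ 2
  have ha2 : a = 2 := by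
    by_contra hne
    have ha3 : 3 ≤ a := by omega
    have hA : (1:ℚ)/a ≤ 1/3 :=
      one_div_le_one_div_of_le (by norm_num) (by exact_mod_cast ha3)
    have hB : (1:ℚ)/b ≤ 1/3 :=
      one_div_le_one_div_of_le (by norm_num) (by exact_mod_cast le_trans ha3 hab)
    have hC : (1:ℚ)/c ≤ 1/3 :=
      one_div_le_one_div_of_le (by norm_num) (by exact_mod_cast le_trans (le_trans ha3 hab) hbc)
    linarith
  subst ha2
  have hb4 : b ≤ 3 := by
    by_contra hne
    have hb4' : 4 ≤ b := by omega
    have hB : (1:ℚ)/b ≤ 1/4 :=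
      one_div_le_one_div_of_le (by norm_num) (by exact_mod_cast hb4')
    have hC : (1:ℚ)/c ≤ 1/4 :=
      one_div_le_one_div_of_le (by norm_num) (by exact_mod_cast le_trans hb4' hbc)
    push_cast at h
    linarith
  interval_cases b
  · exact Or.inr (Or.inl ⟨c, rfl⟩)
  · -- b = 3, so 1/c > 1/6
    have hC : (1:ℚ)/6 < 1/c := by push_cast at h; linarith
    have hc6 : c < 6 := by
      by_contra hge
      have : (1:ℚ)/c ≤ 1/6 :=
        one_div_le_one_div_of_le (by norm_num) (by exact_mod_cast (by omega : 6 ≤ c))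
      linarith
    interval_cases c
    · exact Or.inr (Or.inr (Or.inl rfl))
    · exact Or.inr (Or.inr (Or.inr (Or.inl rfl)))
    · exact Or.inr (Or.inr (Or.inr (Or.inr rfl)))

/-- Classification of positive integer triples with `1/a + 1/b + 1/c > 1`: up to order,
`{a,b,c}` is `{1,x,y}`, `{2,2,x}`, `{2,3,3}`, `{2,3,4}` or `{2,3,5}`. -/
theorem spherical_triple_classification (a b c : ℕ)
    (ha : 1 ≤ a) (hb : 1 ≤ b) (hc : 1 ≤ c)
    (h : 1 < (1 / a + 1 / b + 1 / c : ℚ)) :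
    (∃ x y : ℕ, ({a, b, c} : Multiset ℕ) = {1, x, y}) ∨
    (∃ x : ℕ, ({a, b, c} : Multiset ℕ) = {2, 2, x}) ∨
    ({a, b, c} : Multiset ℕ) = {2, 3, 3} ∨
    ({a, b, c} : Multiset ℕ) = {2, 3, 4} ∨
    ({a, b, c} : Multiset ℕ) = {2, 3, 5} := by
  have swap : ∀ x y z : ℕ, ({x, y, z} : Multiset ℕ) = {y, x, z} := fun x y z =>
    Multiset.cons_swap x y {z}
  have swap2 : ∀ x y z : ℕ, ({x, y, z} : Multiset ℕ) = {x, z, y} := by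
    intro x y z
    show x ::ₘ y ::ₘ z ::ₘ 0 = x ::ₘ z ::ₘ y ::ₘ 0
    exact congrArg _ (Multiset.cons_swap y z 0)
  rcases le_total a b with hab | hba
  · rcases le_total b c with hbc | hcb
    · exact sorted_spherical a b c ha hab hbc h
    · rcases le_total a c with hac | hca
      · have e : ({a, b, c} : Multiset ℕ) = {a, c, b} := swap2 a b c
        rw [e]
        exact sorted_spherical a c b ha hac hcb (by linarith)
      · have e : ({a, b, c} : Multiset ℕ) = {c, a, b} := by
          rw [swap2 a b c, swap a c b]
        rw [e]
        exact sorted_spherical c a b hc hca hab (by linarith)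
  · rcases le_total a c with hac | hca
    · have e : ({a, b, c} : Multiset ℕ) = {b, a, c} := swap a b c
      rw [e]
      exact sorted_spherical b a c hb hba hac (by linarith)
    · rcases le_total b c with hbc | hcb
      · have e : ({a, b, c} : Multiset ℕ) = {b, c, a} := by
          rw [swap a b c, swap2 b a c]
        rw [e]
        exact sorted_spherical b c a hb hbc hca (by linarith)
      · have e : ({a, b, c} : Multiset ℕ) = {c, b, a} := by
          rw [swap2 a b c, swap a c b, swap2 c a b]
        rw [e]
        exact sorted_spherical c b a hc hcb hba (by linarith)
end
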